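/- arXiv:1912.01048 — 3 statements merged into one kernel-verified Lean document; each statement's English description precedes it below -/
import Mathlib

section
/- Let p_1, ..., p_n be distinct complex numbers and H_1, ..., H_n complex numbers. Suppose ∑_{i=1}^n H_i/(q_k − p_i) = 0 for distinct points q_2, ..., q_{n-2} ∈ ℂ \ {p_1,...,p_n} (n ≥ 4). Then for any 1 ≤ j ≤ n−3 and any distinct indices k_1, ..., k_j ∈ {2, ..., n−2}, one has ∑_{i=1}^n H_i / ((q_{k_1} − p_i) ⋯ (q_{k_j} − p_i)) = 0. -/
theorem stmt_4 (n : ℕ) (hn : 4 ≤ n) (p q H : ℕ → ℂ)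
    (hp : ∀ i ∈ Finset.Icc 1 n, ∀ j ∈ Finset.Icc 1 n, i ≠ j → p i ≠ p j)
    (hq : ∀ k ∈ Finset.Icc 2 (n-2), ∀ m ∈ Finset.Icc 2 (n-2), k ≠ m → q k ≠ q m)
    (hpq : ∀ i ∈ Finset.Icc 1 n, ∀ k ∈ Finset.Icc 2 (n-2), q k ≠ p i)
    (h0 : ∀ k ∈ Finset.Icc 2 (n-2), ∑ i ∈ Finset.Icc 1 n, H i / (q k - p i) = 0)
    (j : ℕ) (hj : 1 ≤ j) (hj' : j ≤ n - 3)
    (S : Finset ℕ) (hS : S ⊆ Finset.Icc 2 (n-2)) (hcard : S.card = j) :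
    ∑ i ∈ Finset.Icc 1 n, H i / ∏ k ∈ S, (q k - p i) = 0 := by
  clear hp hj'
  induction j using Nat.strong_induction_on generalizing S with
  | _ m ih =>
    rcases eq_or_lt_of_le hj with h1 | h2
    · -- card S = 1
      obtain ⟨a, rfl⟩ := Finset.card_eq_one.mp (hcard.trans h1.symm)
      simpa [Finset.prod_singleton] using h0 a (hS (Finset.mem_singleton_self a))
    · -- card S ≥ 2
      have hm2 : 1 < S.card := by omega
      obtain ⟨a, ha, b, hb, hab⟩ := Finset.one_lt_card.mp hm2
      have hba : q b - q a ≠ 0 :=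
        sub_ne_zero.mpr (hq b (hS hb) a (hS ha) (Ne.symm hab))
      have key : ∀ i ∈ Finset.Icc 1 n, H i / ∏ k ∈ S, (q k - p i) =
          (H i / ∏ k ∈ S.erase b, (q k - p i) - H i / ∏ k ∈ S.erase a, (q k - p i))
            / (q b - q a) := by
        intro i hi
        have hPa : ∏ k ∈ S, (q k - p i) = (q a - p i) * ∏ k ∈ S.erase a, (q k - p i) :=
          (Finset.mul_prod_erase S _ ha).symm
        have hPb : ∏ k ∈ S, (q k - p i) = (q b - p i) * ∏ k ∈ S.erase b, (q k - p i) :=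
          (Finset.mul_prod_erase S _ hb).symm
        have hane : q a - p i ≠ 0 := sub_ne_zero.mpr (hpq i hi a (hS ha))
        have hbne : q b - p i ≠ 0 := sub_ne_zero.mpr (hpq i hi b (hS hb))
        have h1 : H i / ∏ k ∈ S.erase b, (q k - p i) =
            H i * (q b - p i) / ∏ k ∈ S, (q k - p i) := by
          rw [hPb, mul_comm (H i) (q b - p i), mul_div_mul_left _ _ hbne]
        have h2 : H i / ∏ k ∈ S.erase a, (q k - p i) =
            H i * (q a - p i) / ∏ k ∈ S, (q k - p i) := by
          rw [hPa, mul_comm (H i) (q a - p i), mul_div_mul_left _ _ hane]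
        rw [h1, h2, div_sub_div_same]
        rw [show H i * (q b - p i) - H i * (q a - p i) = H i * (q b - q a) by ring]
        rw [div_div, mul_comm (∏ k ∈ S, (q k - p i)) (q b - q a), mul_comm (H i) (q b - q a),
          mul_div_mul_left _ _ hba]
      rw [Finset.sum_congr rfl key, ← Finset.sum_div, Finset.sum_sub_distrib]
      have hib : ∑ i ∈ Finset.Icc 1 n, H i / ∏ k ∈ S.erase b, (q k - p i) = 0 := by
        apply ih (m - 1) (by omega) (by omega) _ (fun x hx => hS (Finset.erase_subset _ _ hx))
        rw [Finset.card_erase_of_mem hb, hcard]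
      have hia : ∑ i ∈ Finset.Icc 1 n, H i / ∏ k ∈ S.erase a, (q k - p i) = 0 := by
        apply ih (m - 1) (by omega) (by omega) _ (fun x hx => hS (Finset.erase_subset _ _ hx))
        rw [Finset.card_erase_of_mem ha, hcard]
      rw [hib, hia]
      simp
end

section
/- Let p_1, ..., p_n, q_2, ..., q_{n-2} be pairwise distinct complex numbers (n ≥ 4) and H_1, ..., H_n complex numbers satisfying ∑_{i=1}^n H_i/(q_k − p_i) = 0 for all k = 2, ..., n−2. Then for every z ∉ {p_1, ..., p_n}, ∑_{i=1}^n H_i/(z − p_i) = (∏_{k=2}^{n-2}(z − q_k)) · ∑_{i=1}^n (H_i / ∏_{k=2}^{n-2}(p_i − q_k)) · 1/(z − p_i). -/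
theorem stmt_5 (n : ℕ) (hn : 4 ≤ n) (p q H : ℕ → ℂ)
    (hp : ∀ i ∈ Finset.Icc 1 n, ∀ j ∈ Finset.Icc 1 n, i ≠ j → p i ≠ p j)
    (hq : ∀ k ∈ Finset.Icc 2 (n-2), ∀ m ∈ Finset.Icc 2 (n-2), k ≠ m → q k ≠ q m)
    (hpq : ∀ i ∈ Finset.Icc 1 n, ∀ k ∈ Finset.Icc 2 (n-2), q k ≠ p i)
    (h0 : ∀ k ∈ Finset.Icc 2 (n-2), ∑ i ∈ Finset.Icc 1 n, H i / (q k - p i) = 0)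
    (z : ℂ) (hz : ∀ i ∈ Finset.Icc 1 n, z ≠ p i) :
    ∑ i ∈ Finset.Icc 1 n, H i / (z - p i) =
      (∏ k ∈ Finset.Icc 2 (n-2), (z - q k)) *
        ∑ i ∈ Finset.Icc 1 n,
          (H i / ∏ k ∈ Finset.Icc 2 (n-2), (p i - q k)) * (1 / (z - p i)) := by
  classical
  set I := Finset.Icc 1 n with hI
  set K := Finset.Icc 2 (n-2) with hK
  set c : ℕ → ℂ := fun i => H i / ∏ k ∈ K, (p i - q k) with hc
  set A : Polynomial ℂ :=
    ∑ i ∈ I, Polynomial.C (H i) * ∏ j ∈ I.erase i, (Polynomial.X - Polynomial.C (p j)) with hA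
  set B : Polynomial ℂ :=
    (∏ k ∈ K, (Polynomial.X - Polynomial.C (q k))) *
      ∑ i ∈ I, Polynomial.C (c i) * ∏ j ∈ I.erase i, (Polynomial.X - Polynomial.C (p j)) with hB
  have cardI : I.card = n := by simp [hI]
  have cardK : K.card = n - 3 := by rw [hK, Nat.card_Icc]; omega
  -- nonvanishing of the q-products
  have prodK_ne : ∀ i ∈ I, (∏ k ∈ K, (p i - q k)) ≠ 0 := by
    intro i hi
    exact Finset.prod_ne_zero_iff.2 fun k hk => sub_ne_zero.2 fun h => hpq i hi k hk h.symm
  -- evaluation formulas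
  have evalA : ∀ x : ℂ, A.eval x = ∑ i ∈ I, H i * ∏ j ∈ I.erase i, (x - p j) := by
    intro x; simp [hA, Polynomial.eval_finset_sum, Polynomial.eval_prod]
  have evalB : ∀ x : ℂ, B.eval x =
      (∏ k ∈ K, (x - q k)) * ∑ i ∈ I, c i * ∏ j ∈ I.erase i, (x - p j) := by
    intro x; simp [hB, Polynomial.eval_finset_sum, Polynomial.eval_prod]
  -- F vanishes at each p m
  have evalp : ∀ m ∈ I, A.eval (p m) = B.eval (p m) := by
    intro m hm
    have hsum : ∀ (G : ℕ → ℂ),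
        ∑ i ∈ I, G i * ∏ j ∈ I.erase i, (p m - p j) = G m * ∏ j ∈ I.erase m, (p m - p j) := by
      intro G
      refine Finset.sum_eq_single m (fun i hi hne => ?_) (fun h => absurd hm h)
      have hmem : m ∈ I.erase i := Finset.mem_erase.2 ⟨fun h => hne h.symm, hm⟩
      rw [Finset.prod_eq_zero hmem (by ring), mul_zero]
    rw [evalA, evalB, hsum, hsum]
    rw [← mul_assoc, hc]
    rw [mul_div_cancel₀ _ (prodK_ne m hm)]
  -- F vanishes at each q m
  have evalq : ∀ m ∈ K, A.eval (q m) = B.eval (q m) := by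
    intro m hm
    have h1 : (∏ k ∈ K, (q m - q k)) = 0 :=
      Finset.prod_eq_zero hm (by ring)
    rw [evalA, evalB, h1, zero_mul]
    have h2 : ∀ i ∈ I, H i * ∏ j ∈ I.erase i, (q m - p j)
        = (H i / (q m - p i)) * ∏ j ∈ I, (q m - p j) := by
      intro i hi
      rw [← Finset.mul_prod_erase I _ hi]
      have hne : q m - p i ≠ 0 := sub_ne_zero.2 (hpq i hi m hm)
      field_simp
    rw [Finset.sum_congr rfl h2, ← Finset.sum_mul, h0 m hm, zero_mul]
  -- degree bound
  have hdeg : ∀ i ∈ I,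
      (∏ j ∈ I.erase i, (Polynomial.X - Polynomial.C (p j))).natDegree = n - 1 := by
    intro i hi
    rw [Polynomial.natDegree_prod_of_monic _ _ fun j _ => Polynomial.monic_X_sub_C _]
    simp [Finset.card_erase_of_mem hi, cardI]
  have hdegq : (∏ k ∈ K, (Polynomial.X - Polynomial.C (q k))).natDegree = n - 3 := by
    rw [Polynomial.natDegree_prod_of_monic _ _ fun k _ => Polynomial.monic_X_sub_C _]
    simp [cardK]
  have degA : A.natDegree ≤ n - 1 := by
    refine Polynomial.natDegree_sum_le_of_forall_le _ _ fun i hi => ?_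
    exact le_trans (Polynomial.natDegree_C_mul_le _ _) (le_of_eq (hdeg i hi))
  have degB : B.natDegree ≤ (n - 3) + (n - 1) := by
    refine le_trans (Polynomial.natDegree_mul_le) ?_
    refine add_le_add (le_of_eq hdegq) ?_
    refine Polynomial.natDegree_sum_le_of_forall_le _ _ fun i hi => ?_
    exact le_trans (Polynomial.natDegree_C_mul_le _ _) (le_of_eq (hdeg i hi))
  -- the root set
  set S : Finset ℂ := I.image p ∪ K.image q with hS
  have cardS : S.card = n + (n - 3) := by
    rw [hS, Finset.card_union_of_disjoint, Finset.card_image_of_injOn,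
      Finset.card_image_of_injOn, cardI, cardK]
    · intro i hi j hj hij
      by_contra hne
      exact hq i hi j hj hne hij
    · intro i hi j hj hij
      by_contra hne
      exact hp i hi j hj hne hij
    · rw [Finset.disjoint_left]
      rintro x hx hx'
      obtain ⟨i, hi, rfl⟩ := Finset.mem_image.1 hx
      obtain ⟨k, hk, hke⟩ := Finset.mem_image.1 hx'
      exact hpq i hi k hk hke
  -- F = 0
  have hF : A - B = 0 := by
    refine Polynomial.eq_zero_of_natDegree_lt_card_of_eval_eq_zero' _ S (fun x hx => ?_) ?_
    · rcases Finset.mem_union.1 hx with hx | hx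
      · obtain ⟨m, hm, rfl⟩ := Finset.mem_image.1 hx
        simp [evalp m hm]
      · obtain ⟨m, hm, rfl⟩ := Finset.mem_image.1 hx
        simp [evalq m hm]
    · rw [cardS]
      calc (A - B).natDegree ≤ max A.natDegree B.natDegree := Polynomial.natDegree_sub_le _ _
        _ < n + (n - 3) := by
            rw [max_lt_iff]
            constructor <;> omega
  have hAB : A.eval z = B.eval z := by
    have := congrArg (Polynomial.eval z) hF
    simpa [sub_eq_zero] using this
  -- final algebra
  have hzne : ∀ i ∈ I, z - p i ≠ 0 := fun i hi => sub_ne_zero.2 (hz i hi)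
  have hPne : (∏ j ∈ I, (z - p j)) ≠ 0 := Finset.prod_ne_zero_iff.2 hzne
  refine mul_left_cancel₀ hPne ?_
  have e1 : (∏ j ∈ I, (z - p j)) * ∑ i ∈ I, H i / (z - p i) = A.eval z := by
    rw [evalA, Finset.mul_sum]
    refine Finset.sum_congr rfl fun i hi => ?_
    rw [← Finset.mul_prod_erase I _ hi]
    have := hzne i hi
    field_simp
  have e2 : (∏ j ∈ I, (z - p j)) * ((∏ k ∈ K, (z - q k)) *
      ∑ i ∈ I, c i * (1 / (z - p i))) = B.eval z := by
    rw [evalB]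
    rw [mul_left_comm]
    congr 1
    rw [Finset.mul_sum]
    refine Finset.sum_congr rfl fun i hi => ?_
    rw [← Finset.mul_prod_erase I _ hi]
    have := hzne i hi
    field_simp
  rw [e1, e2, hAB]
end

section
/- Let n ≥ 4, let p_1, ..., p_n be distinct complex numbers, and let α_1, ..., α_n be complex numbers satisfying the linear relations (p_{n−1} − p_n)α_k − (p_k − p_n)α_{n−1} + (p_k − p_{n−1})α_n = 0 for k = 1, ..., n−2. Let E_{ℓ,i} denote the ℓ-th elementary symmetric polynomial in p_1, ..., p_n with p_i omitted, let Δ = ∏_{1≤i<j≤n}(p_i − p_j), and let M_ℓ be the n×n matrix whose first row is (E_{ℓ,1}α_1, ..., E_{ℓ,n}α_n) and whose remaining rows are (p_1^{n−2},...,p_n^{n−2}), ..., (p_1,...,p_n), (1,...,1). Then (−1)^n det(M_ℓ)/Δ equals (p_n α_{n−1} − p_{n−1} α_n)/(p_{n−1} − p_n) if ℓ = n−1, equals (α_{n−1} − α_n)/(p_{n−1} − p_n) if ℓ = n−2, and equals 0 if ℓ < n−2. -/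
/-!
The linear relations say that the points `(p k, α k)` lie on one line, `α k = A * p k - B`.
Since `e_ℓ(p without p i) = ∑_{m ≤ ℓ} (-p i) ^ m * e_{ℓ-m}(p)`, the first row of `M` lists the
values at the nodes `p i` of `f = (A X - B) * ∑_{m ≤ ℓ} (-X) ^ m e_{ℓ-m}(p)`, a polynomial of degree
at most `n`, while the other rows are the monomials `X ^ (n - 2), …, 1` at the nodes. Subtracting
from `f` its top coefficient times `∏ (X - p i)`, which vanishes at the nodes, and then the lower
monomials, leaves `det M = (f_{n-1} + e_1(p) f_n) * Δ`; the three cases are read off these two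
coefficients of `f`.
-/

open Polynomial Finset Matrix

namespace Multiset

variable {R : Type*}

theorem esymm_zero [CommSemiring R] (s : Multiset R) : s.esymm 0 = 1 := by simp [esymm]

theorem esymm_cons_succ [CommSemiring R] (a : R) (s : Multiset R) (k : ℕ) :
    (a ::ₘ s).esymm (k + 1) = s.esymm (k + 1) + a * s.esymm k := by
  simp [esymm, map_map, sum_map_mul_left]

variable [CommRing R]

noncomputable def esymmErasePoly (s : Multiset R) (ℓ : ℕ) : R[X] :=
  ∑ m ∈ Finset.range (ℓ + 1), monomial m ((-1) ^ m * s.esymm (ℓ - m))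

theorem eval_esymmErasePoly_cons (a : R) (s : Multiset R) (ℓ : ℕ) :
    (esymmErasePoly (a ::ₘ s) ℓ).eval a = s.esymm ℓ := by
  simp only [esymmErasePoly, eval_finsetSum, eval_monomial]
  induction ℓ with
  | zero => simp [esymm_zero]
  | succ ℓ ih =>
    rw [sum_range_succ', eq_sub_of_add_eq (esymm_cons_succ a s ℓ).symm, ← ih, mul_sum]
    simp only [Nat.add_sub_add_right, pow_zero, one_mul, mul_one, Nat.sub_zero, pow_succ]
    rw [sub_eq_add_neg, add_comm, ← sum_neg_distrib]
    congr 1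
    exact sum_congr rfl fun m _ => by ring

theorem coeff_esymmErasePoly (s : Multiset R) (ℓ k : ℕ) :
    (esymmErasePoly s ℓ).coeff k = if k ≤ ℓ then (-1) ^ k * s.esymm (ℓ - k) else 0 := by
  simp [esymmErasePoly, finsetSum_coeff, coeff_monomial]

theorem natDegree_esymmErasePoly_le (s : Multiset R) (ℓ : ℕ) :
    (esymmErasePoly s ℓ).natDegree ≤ ℓ :=
  natDegree_le_iff_coeff_eq_zero.2 fun k hk => by
    rw [coeff_esymmErasePoly, if_neg hk.not_ge]

end Multiset

theorem Finset.esymm_erase_val_map_eq_eval {R ι : Type*} [CommRing R] [DecidableEq ι]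
    (s : Finset ι) (p : ι → R) {i : ι} (hi : i ∈ s) (ℓ : ℕ) :
    ((s.erase i).val.map p).esymm ℓ = ((s.val.map p).esymmErasePoly ℓ).eval (p i) := by
  rw [← Multiset.cons_erase hi, ← erase_val, Multiset.map_cons,
    Multiset.eval_esymmErasePoly_cons]

namespace Matrix

variable {R : Type*} [CommRing R]

section

-- `(projVandermonde 1 x)ᵀ` has rows `x ^ (n - 1), …, x, 1`.
variable {n : ℕ} [NeZero n] (x : Fin n → R)

theorem det_updateRow_eval_of_natDegree_lt {f : R[X]} (hf : f.natDegree < n) :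
    ((projVandermonde 1 x)ᵀ.updateRow 0 fun c => f.eval (x c)).det =
      f.coeff (n - 1) * (projVandermonde 1 x).det := by
  have hrow : (fun c => f.eval (x c)) = ∑ k, f.coeff k.rev • (projVandermonde 1 x)ᵀ k := by
    ext c
    simp only [eval_eq_sum_range' hf, Finset.sum_apply, Pi.smul_apply, transpose_apply,
      projVandermonde_apply, Pi.one_apply, one_pow, one_mul, smul_eq_mul]
    rw [← Fin.sum_univ_eq_sum_range (fun i => f.coeff i * x c ^ i)]
    exact (Fintype.sum_equiv Fin.revPerm _ _ fun k => by simp).symm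
  rw [hrow, det_updateRow_sum, det_transpose, smul_eq_mul, Fin.val_rev, Fin.val_zero]

theorem det_updateRow_eval_of_natDegree_le {f P : R[X]} (hP : P.Monic) (hPn : P.natDegree = n)
    (hPx : ∀ c, P.eval (x c) = 0) (hf : f.natDegree ≤ n) :
    ((projVandermonde 1 x)ᵀ.updateRow 0 fun c => f.eval (x c)).det =
      (f.coeff (n - 1) - f.coeff n * P.coeff (n - 1)) * (projVandermonde 1 x).det := by
  have heval : (fun c => f.eval (x c)) = fun c => (f - C (f.coeff n) * P).eval (x c) := by
    simp [hPx]
  have hdeg : (f - C (f.coeff n) * P).natDegree < n := by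
    refine Nat.lt_of_le_sub_one (NeZero.pos n) (natDegree_le_iff_coeff_eq_zero.2 fun N hN => ?_)
    rw [coeff_sub, coeff_C_mul]
    obtain rfl | hN : N = n ∨ n < N := by omega
    · rw [← hPn, hP.coeff_natDegree, hPn, mul_one, sub_self]
    · rw [coeff_eq_zero_of_natDegree_lt (hf.trans_lt hN),
        coeff_eq_zero_of_natDegree_lt (hPn.trans_lt hN), mul_zero, sub_zero]
  rw [heval, det_updateRow_eval_of_natDegree_lt x hdeg, coeff_sub, coeff_C_mul]

theorem det_updateRow_eval_of_forall_mem {f : R[X]} (hf : f.natDegree ≤ n) (s : Multiset R)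
    (hs : Multiset.card s = n) (hx : ∀ c, x c ∈ s) :
    ((projVandermonde 1 x)ᵀ.updateRow 0 fun c => f.eval (x c)).det =
      (f.coeff (n - 1) + s.esymm 1 * f.coeff n) * (projVandermonde 1 x).det := by
  nontriviality R
  have hcoeff := Multiset.prod_X_sub_C_coeff s (k := n - 1) (by omega)
  rw [hs, Nat.sub_sub_self NeZero.one_le, pow_one] at hcoeff
  rw [det_updateRow_eval_of_natDegree_le x (monic_multiset_prod_of_monic _ _ fun t _ =>
      monic_X_sub_C t) (by rw [natDegree_multiset_prod_X_sub_C_eq_card, hs]) (fun c => ?_) hf,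
    hcoeff]
  · ring
  · rw [eval_multiset_prod]
    exact Multiset.prod_eq_zero (Multiset.mem_map.2 ⟨_, Multiset.mem_map_of_mem _ (hx c),
      by simp⟩)

end

theorem det_updateRow_eval_linear_mul_esymmErasePoly {N ℓ : ℕ} (hℓ : ℓ ≤ N + 1)
    (x : Fin (N + 2) → R) (s : Multiset R) (hs : Multiset.card s = N + 2) (hx : ∀ c, x c ∈ s)
    (a b : R) :
    (-1) ^ N * ((projVandermonde 1 x)ᵀ.updateRow 0 fun c =>
        ((C a * X - C b) * s.esymmErasePoly ℓ).eval (x c)).det =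
      (if ℓ = N + 1 then b else if ℓ = N then a else 0) * (projVandermonde 1 x).det := by
  have hdeg : ((C a * X - C b) * s.esymmErasePoly ℓ).natDegree ≤ N + 2 := by
    have h1 := s.natDegree_esymmErasePoly_le ℓ
    have h2 : (C a * X - C b).natDegree ≤ 1 := by
      rw [sub_eq_add_neg, ← C_neg]
      exact natDegree_linear_le
    exact natDegree_mul_le.trans (by omega)
  have hcoeff (k : ℕ) : ((C a * X - C b) * s.esymmErasePoly ℓ).coeff (k + 1) =
      a * (s.esymmErasePoly ℓ).coeff k - b * (s.esymmErasePoly ℓ).coeff (k + 1) := by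
    simp only [sub_mul, mul_assoc, coeff_sub, coeff_C_mul, coeff_X_mul]
  have hsq : ((-1 : R) ^ N) * (-1) ^ N = 1 := by rw [← pow_add, Even.neg_one_pow ⟨N, rfl⟩]
  rw [det_updateRow_eval_of_forall_mem x hdeg s hs hx, ← mul_assoc,
    show N + 2 - 1 = N + 1 from rfl, hcoeff, hcoeff]
  congr 1
  simp only [Multiset.coeff_esymmErasePoly]
  obtain rfl | rfl | hlt : ℓ = N + 1 ∨ N = ℓ ∨ ℓ < N := by omega
  · simp only [N.le_succ, le_rfl, show ¬N + 2 ≤ N + 1 by omega, ↓reduceIte,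
      Nat.add_sub_cancel_left, Nat.sub_self, Multiset.esymm_zero]
    linear_combination b * hsq
  · simp only [le_rfl, show ¬N + 1 ≤ N by omega, show ¬N + 2 ≤ N by omega,
      show N ≠ N + 1 by omega, ↓reduceIte, Nat.sub_self, Multiset.esymm_zero]
    linear_combination a * hsq
  · simp only [show ¬N ≤ ℓ by omega, show ¬N + 1 ≤ ℓ by omega, show ¬N + 2 ≤ ℓ by omega,
      show ℓ ≠ N + 1 by omega, show ℓ ≠ N by omega, ↓reduceIte]
    ring

end Matrix

theorem prod_Icc_prod_Ioc_eq_prod_fin {M : Type*} [CommMonoid M] (n : ℕ) (g : ℕ → ℕ → M) :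
    ∏ i ∈ Icc 1 n, ∏ j ∈ Ioc i n, g i j = ∏ a : Fin n, ∏ b ∈ Ioi a, g (a + 1) (b + 1) := by
  have hinner (a : Fin n) :
      ∏ b ∈ Ioi a, g (a + 1) (b + 1) = ∏ j ∈ Ioc (a + 1 : ℕ) n, g (a + 1) j := by
    refine (prod_map (Ioi a) Fin.valEmbedding (fun j => g (a + 1) (j + 1))).symm.trans ?_
    rw [Fin.map_valEmbedding_Ioi, ← Ico_add_one_left_eq_Ioo, prod_Ico_add',
      Ico_add_one_add_one_eq_Ioc]
  rw [Fintype.prod_congr _ _ hinner,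
    Fin.prod_univ_eq_prod_range (fun a => ∏ j ∈ Ioc (a + 1) n, g (a + 1) j), range_eq_Ico,
    prod_Ico_add' (fun i => ∏ j ∈ Ioc i n, g i j), Ico_add_one_right_eq_Icc, zero_add]

theorem prod_Icc_prod_Ioc_sub_ne_zero {R : Type*} [CommRing R] [IsDomain R] {n : ℕ}
    {p : ℕ → R} (hp : ∀ i ∈ Icc 1 n, ∀ j ∈ Icc 1 n, i ≠ j → p i ≠ p j) :
    ∏ i ∈ Icc 1 n, ∏ j ∈ Ioc i n, (p i - p j) ≠ 0 :=
  prod_ne_zero_iff.2 fun i hi => prod_ne_zero_iff.2 fun j hj =>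
    sub_ne_zero.2 <| hp i hi j (Icc_subset_Icc_left (mem_Icc.1 hi).1 (Ioc_subset_Icc_self hj))
      (mem_Ioc.1 hj).1.ne

theorem det_projVandermonde_one_eq_prod_Icc {R : Type*} [CommRing R] (n : ℕ) (p : ℕ → R) :
    (projVandermonde 1 fun c : Fin n => p (c + 1)).det =
      ∏ i ∈ Icc 1 n, ∏ j ∈ Ioc i n, (p i - p j) := by
  simp [det_projVandermonde, prod_Icc_prod_Ioc_eq_prod_fin]

theorem eq_affine_of_collinear {K : Type*} [Field K] {n : ℕ} {p α : ℕ → K}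
    (hq : p (n - 1) - p n ≠ 0)
    (hrel : ∀ k ∈ Icc 1 (n - 2),
      (p (n - 1) - p n) * α k - (p k - p n) * α (n - 1) + (p k - p (n - 1)) * α n = 0)
    {k : ℕ} (hk : k ∈ Icc 1 n) :
    α k = (α (n - 1) - α n) / (p (n - 1) - p n) * p k -
      (p n * α (n - 1) - p (n - 1) * α n) / (p (n - 1) - p n) := by
  rw [div_mul_eq_mul_div, ← sub_div, eq_div_iff hq]
  obtain ⟨hk1, hkn⟩ := mem_Icc.1 hk
  obtain hk | rfl | rfl : k ≤ n - 2 ∨ k = n - 1 ∨ k = n := by omega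
  · linear_combination hrel k (mem_Icc.2 ⟨hk1, hk⟩)
  · ring
  · ring

theorem stmt_8 (n : ℕ) (hn : 4 ≤ n) (p α : ℕ → ℂ)
    (hp : ∀ i ∈ Finset.Icc 1 n, ∀ j ∈ Finset.Icc 1 n, i ≠ j → p i ≠ p j)
    (hrel : ∀ k ∈ Finset.Icc 1 (n-2),
      (p (n-1) - p n) * α k - (p k - p n) * α (n-1) + (p k - p (n-1)) * α n = 0)
    (ℓ : ℕ) (hℓ : ℓ ≤ n - 1)
    (E : ℕ → ℂ)
    (hE : ∀ i, E i = ∑ S ∈ ((Finset.Icc 1 n).erase i).powersetCard ℓ, ∏ j ∈ S, p j)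
    (Δ : ℂ) (hΔ : Δ = ∏ i ∈ Finset.Icc 1 n, ∏ j ∈ Finset.Ioc i n, (p i - p j))
    (M : Matrix (Fin n) (Fin n) ℂ)
    (hM : ∀ r c, M r c = if (r : ℕ) = 0 then E ((c : ℕ) + 1) * α ((c : ℕ) + 1)
      else p ((c : ℕ) + 1) ^ (n - 1 - (r : ℕ))) :
    (ℓ = n - 1 → (-1 : ℂ)^n * M.det / Δ =
        (p n * α (n-1) - p (n-1) * α n) / (p (n-1) - p n)) ∧
    (ℓ = n - 2 → (-1 : ℂ)^n * M.det / Δ = (α (n-1) - α n) / (p (n-1) - p n)) ∧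
    (ℓ < n - 2 → (-1 : ℂ)^n * M.det / Δ = 0) := by
  obtain ⟨N, rfl⟩ : ∃ N, n = N + 2 := ⟨n - 2, by omega⟩
  have hq : p (N + 2 - 1) - p (N + 2) ≠ 0 :=
    sub_ne_zero.2 (hp _ (by simp) _ (by simp) (by omega))
  have halpha := fun k (hk : k ∈ Icc 1 (N + 2)) => eq_affine_of_collinear hq hrel hk
  simp only [show N + 2 - 1 = N + 1 from rfl, show N + 2 - 2 = N from rfl] at halpha hℓ hM ⊢
  set A := (α (N + 1) - α (N + 2)) / (p (N + 1) - p (N + 2))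
  set B := (p (N + 2) * α (N + 1) - p (N + 1) * α (N + 2)) / (p (N + 1) - p (N + 2))
  have hmem (c : Fin (N + 2)) : (c : ℕ) + 1 ∈ Icc 1 (N + 2) := mem_Icc.2 ⟨by omega, c.isLt⟩
  have hrow : M = (projVandermonde 1 fun c => p (c + 1))ᵀ.updateRow 0 fun c =>
      ((C A * X - C B) * ((Icc 1 (N + 2)).val.map p).esymmErasePoly ℓ).eval (p (c + 1)) := by
    ext r c
    rw [hM]
    split_ifs with hr
    · rw [show r = 0 from Fin.ext hr, updateRow_self, hE, ← esymm_map_val,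
        esymm_erase_val_map_eq_eval _ _ (hmem c), halpha _ (hmem c)]
      simp only [eval_mul, eval_sub, eval_C, eval_X]
      ring
    · rw [updateRow_ne fun h => hr (congrArg Fin.val h)]
      simp [projVandermonde_apply, Fin.val_rev]
  have hdet := det_updateRow_eval_linear_mul_esymmErasePoly hℓ (fun c => p (c + 1))
    ((Icc 1 (N + 2)).val.map p) (by simp) (fun c => Multiset.mem_map_of_mem p (hmem c)) A B
  rw [← hrow, det_projVandermonde_one_eq_prod_Icc, ← hΔ] at hdet
  have hval : (-1) ^ (N + 2) * M.det / Δ = if ℓ = N + 1 then B else if ℓ = N then A else 0 := by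
    rw [div_eq_iff (hΔ ▸ prod_Icc_prod_Ioc_sub_ne_zero hp), ← hdet]
    ring
  refine ⟨fun h => ?_, fun h => ?_, fun h => ?_⟩
  · rw [hval, if_pos h]
  · rw [hval, if_neg (by omega), if_pos h]
  · rw [hval, if_neg (by omega), if_neg (by omega)]
end
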